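/- arXiv:quant-ph/9905099 — 3 statements merged into one kernel-verified Lean document; each statement's English description precedes it below -/
import Mathlib

section
/- Let G be a finite abelian group, H ≤ G with hidden-subgroup state ρ_H, and J ≤ G a proper subgroup of H. Let A^⊥ be the projection onto span{|χ⟩ : χ ∉ H^⊥}. Then tr(ρ_J A^⊥) ≥ 1/2. -/
open scoped BigOperators ComplexConjugate

noncomputable section

variable {G : Type*}

/-- The annihilator `H^⊥` of a subgroup `H` of a (finite) abelian group `G`
inside the character group `Ĝ = G →* ℂˣ`: the characters trivial on `H`. -/
def annihilator [CommGroup G] (H : Subgroup G) : Subgroup (G →* ℂˣ) where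
  carrier := {χ | ∀ h ∈ H, χ h = 1}
  one_mem' := fun h _ => rfl
  mul_mem' := fun {a b} ha hb h hh => by simp [ha h hh, hb h hh]
  inv_mem' := fun {a} ha h hh => by simp [ha h hh]

/-- The normalized coset state `|cH⟩ = (1/√|H|) ∑_{h∈H} e_{ch}` in `ℂ[G]`. -/
def cosetState [CommGroup G] [Fintype G] [DecidableEq G] (H : Subgroup G) (c : G) :
    EuclideanSpace ℂ G :=
  ((Real.sqrt (Nat.card H) : ℂ))⁻¹ • ∑ᶠ h ∈ (H : Set G), EuclideanSpace.single (c * h) (1 : ℂ)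

/-- The normalized character state `|χ⟩ = (1/√|G|) ∑_{g∈G} χ(g) e_g` in `ℂ[G]`. -/
def charState [CommGroup G] [Fintype G] [DecidableEq G] (χ : G →* ℂˣ) : EuclideanSpace ℂ G :=
  ((Real.sqrt (Fintype.card G) : ℂ))⁻¹ • ∑ g : G, (χ g : ℂ) • EuclideanSpace.single g (1 : ℂ)

/-- The outer product `|v⟩⟨v|` as a matrix: `(|v⟩⟨v|)_{ij} = v i * conj (v j)`. -/
def outer [Fintype G] (v : EuclideanSpace ℂ G) : Matrix G G ℂ :=
  Matrix.of fun i j => v i * conj (v j)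

/-! ### Auxiliary lemmas -/

open scoped Classical

lemma mem_annihilator [CommGroup G] {J : Subgroup G} {χ : G →* ℂˣ} :
    χ ∈ annihilator J ↔ ∀ h ∈ J, χ h = 1 := Iff.rfl

lemma charGroup_equiv [CommGroup G] [Finite G] : Nonempty ((G →* ℂˣ) ≃* G) := by
  have h : NeZero ((Monoid.exponent G : ℕ) : ℂ) :=
    ⟨Nat.cast_ne_zero.mpr Monoid.exponent_ne_zero_of_finite⟩
  exact CommGroup.monoidHom_mulEquiv_of_hasEnoughRootsOfUnity G ℂ

instance charGroup_finite [CommGroup G] [Finite G] : Finite (G →* ℂˣ) :=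
  Finite.of_equiv G (charGroup_equiv.some.symm.toEquiv)

def annihilatorEquiv [CommGroup G] (J : Subgroup G) :
    ((G ⧸ J) →* ℂˣ) ≃ annihilator J where
  toFun φ := ⟨φ.comp (QuotientGroup.mk' J), fun h hh => by
    simp [(QuotientGroup.eq_one_iff h).mpr hh]⟩
  invFun χ := QuotientGroup.lift J (χ : G →* ℂˣ) (fun h hh => χ.2 h hh)
  left_inv φ := by
    ext x
    rfl
  right_inv χ := by
    apply Subtype.ext
    ext g
    rfl

lemma card_annihilator [CommGroup G] [Finite G] (J : Subgroup G) :
    Nat.card (annihilator J) * Nat.card J = Nat.card G := by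
  rw [Nat.card_congr (annihilatorEquiv J).symm, Nat.card_congr charGroup_equiv.some.toEquiv]
  exact (Subgroup.card_eq_card_quotient_mul_card_subgroup J).symm

lemma cosetState_apply [CommGroup G] [Fintype G] [DecidableEq G] (J : Subgroup G) (c g : G) :
    cosetState J c g =
      (Real.sqrt (Nat.card J) : ℂ)⁻¹ * (if c⁻¹ * g ∈ J then 1 else 0) := by
  have hfin : (J : Set G).Finite := Set.toFinite _
  rw [cosetState, ← Set.Finite.coe_toFinset hfin, finsum_mem_coe_finset]
  have key : (∑ h ∈ hfin.toFinset, EuclideanSpace.single (c * h) (1 : ℂ)) g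
      = if c⁻¹ * g ∈ J then 1 else 0 := by
    rw [WithLp.ofLp_sum, Finset.sum_apply]
    have h1 : ∀ h ∈ hfin.toFinset,
        EuclideanSpace.single (c * h) (1 : ℂ) g = if c⁻¹ * g = h then 1 else 0 := by
      intro h _
      rw [EuclideanSpace.single_apply]
      exact if_congr ⟨fun e => by simp [e], fun e => by simp [← e]⟩ rfl rfl
    rw [Finset.sum_congr rfl h1, Finset.sum_ite_eq]
    simp only [Set.Finite.mem_toFinset, SetLike.mem_coe]
  show ((Real.sqrt (Nat.card J) : ℂ))⁻¹ •
      ((∑ h ∈ hfin.toFinset, EuclideanSpace.single (c * h) (1:ℂ)) g) = _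
  rw [key, smul_eq_mul]

lemma charState_apply [CommGroup G] [Fintype G] [DecidableEq G] (χ : G →* ℂˣ) (g : G) :
    charState χ g = (Real.sqrt (Fintype.card G) : ℂ)⁻¹ * (χ g : ℂ) := by
  show ((Real.sqrt (Fintype.card G) : ℂ))⁻¹ •
      ((∑ g' : G, (χ g' : ℂ) • EuclideanSpace.single g' (1:ℂ)) g) = _
  rw [smul_eq_mul]
  congr 1
  rw [WithLp.ofLp_sum, Finset.sum_apply]
  have h1 : ∀ g' ∈ Finset.univ, ((χ g' : ℂ) • EuclideanSpace.single g' (1:ℂ)) g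
      = if g = g' then (χ g' : ℂ) else 0 := by
    intro g' _
    rw [PiLp.smul_apply, EuclideanSpace.single_apply, smul_eq_mul]
    split <;> simp
  rw [Finset.sum_congr rfl h1, Finset.sum_ite_eq]
  simp

lemma trace_outer_outer [Fintype G] (v w : EuclideanSpace ℂ G) :
    Matrix.trace (outer v * outer w) =
      (∑ j, conj (v j) * w j) * conj (∑ j, conj (v j) * w j) := by
  rw [Matrix.trace]
  simp only [Matrix.diag_apply, Matrix.mul_apply, outer, Matrix.of_apply]
  rw [Finset.sum_comm, Finset.sum_mul]
  refine Finset.sum_congr rfl fun j _ => ?_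
  simp only [map_sum, map_mul, Complex.conj_conj]
  rw [Finset.mul_sum]
  refine Finset.sum_congr rfl fun i _ => ?_
  ring

lemma char_pow_one [CommGroup G] [Fintype G] (χ : G →* ℂˣ) (g : G) :
    ((χ g : ℂ)) ^ (Fintype.card G) = 1 := by
  have : (χ g) ^ (Fintype.card G) = 1 := by
    rw [← map_pow, pow_card_eq_one, map_one]
  calc ((χ g : ℂ)) ^ (Fintype.card G) = (((χ g) ^ (Fintype.card G) : ℂˣ) : ℂ) := by
        rw [Units.val_pow_eq_pow_val]
    _ = 1 := by rw [this, Units.val_one]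

lemma conj_char_mul [CommGroup G] [Fintype G] (χ : G →* ℂˣ) (g : G) :
    conj ((χ g : ℂ)) * (χ g : ℂ) = 1 := by
  have h := Complex.norm_eq_one_of_pow_eq_one (char_pow_one χ g) Fintype.card_ne_zero
  have h2 : Complex.normSq ((χ g : ℂ)) = 1 := by
    rw [Complex.normSq_eq_norm_sq, h, one_pow]
  rw [mul_comm, Complex.mul_conj, h2, Complex.ofReal_one]

lemma char_sum [CommGroup G] [Fintype G] (χ : G →* ℂˣ) (J : Subgroup G) :
    (∑ h : G, if h ∈ J then (χ h : ℂ) else 0) =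
      if (∀ h ∈ J, χ h = 1) then ((Nat.card J : ℕ) : ℂ) else 0 := by
  by_cases hJ : ∀ h ∈ J, χ h = 1
  · rw [if_pos hJ]
    have : ∀ h : G, (if h ∈ J then (χ h : ℂ) else 0) = if h ∈ J then 1 else 0 := by
      intro h
      by_cases hh : h ∈ J
      · rw [if_pos hh, if_pos hh, hJ h hh, Units.val_one]
      · rw [if_neg hh, if_neg hh]
    rw [Finset.sum_congr rfl fun h _ => this h, Finset.sum_boole]
    rw [Nat.card_eq_fintype_card, Fintype.card_subtype]
  · rw [if_neg hJ]
    push_neg at hJ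
    obtain ⟨h0, hh0, hne⟩ := hJ
    set S := ∑ h : G, if h ∈ J then (χ h : ℂ) else 0 with hS
    have h2 : S = (χ h0 : ℂ) * S := by
      rw [hS, Finset.mul_sum]
      rw [← Equiv.sum_comp (Equiv.mulLeft h0) (fun h => if h ∈ J then (χ h : ℂ) else 0)]
      refine Finset.sum_congr rfl fun h _ => ?_
      simp only [Equiv.coe_mulLeft]
      by_cases hJh : h ∈ J
      · have hm : h0 * h ∈ J := J.mul_mem hh0 hJh
        simp [hm, hJh, map_mul, Units.val_mul]
      · have hm : h0 * h ∉ J := fun hc => hJh (by simpa using J.mul_mem (J.inv_mem hh0) hc)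
        simp [hm, hJh]
    have h3 : ((χ h0 : ℂ) - 1) * S = 0 := by rw [sub_mul, one_mul, ← h2, sub_self]
    rcases mul_eq_zero.mp h3 with h4 | h4
    · exfalso
      apply hne
      have : (χ h0 : ℂ) = 1 := by linear_combination h4
      exact Units.ext this
    · exact h4

lemma overlap [CommGroup G] [Fintype G] [DecidableEq G] (J : Subgroup G) (c : G) (χ : G →* ℂˣ) :
    (∑ j : G, conj (cosetState J c j) * charState χ j) =
      (Real.sqrt (Nat.card J) : ℂ)⁻¹ * (Real.sqrt (Fintype.card G) : ℂ)⁻¹ * ((χ c : ℂ) *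
        (∑ h : G, if h ∈ J then (χ h : ℂ) else 0)) := by
  have key : ∀ j : G, conj (cosetState J c j) * charState χ j =
      (Real.sqrt (Nat.card J) : ℂ)⁻¹ * (Real.sqrt (Fintype.card G) : ℂ)⁻¹ *
        ((if c⁻¹ * j ∈ J then 1 else 0) * (χ j : ℂ)) := by
    intro j
    rw [cosetState_apply, charState_apply, map_mul, map_inv₀, Complex.conj_ofReal]
    rw [apply_ite conj, map_one, map_zero]
    ring
  rw [Finset.sum_congr rfl fun j _ => key j, ← Finset.mul_sum]
  congr 1
  rw [← Equiv.sum_comp (Equiv.mulLeft c)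
    (fun j => (if c⁻¹ * j ∈ J then (1:ℂ) else 0) * (χ j : ℂ)), Finset.mul_sum]
  refine Finset.sum_congr rfl fun h _ => ?_
  simp only [Equiv.coe_mulLeft, inv_mul_cancel_left, map_mul, Units.val_mul]
  by_cases hh : h ∈ J
  · rw [if_pos hh, if_pos hh]; ring
  · rw [if_neg hh, if_neg hh]; ring

lemma trace_term [CommGroup G] [Fintype G] [DecidableEq G] (J : Subgroup G) (c : G)
    (χ : G →* ℂˣ) :
    Matrix.trace (outer (cosetState J c) * outer (charState χ)) =
      if (∀ h ∈ J, χ h = 1) then ((Nat.card J : ℂ) / (Fintype.card G : ℂ)) else 0 := by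
  rw [trace_outer_outer, overlap, char_sum]
  by_cases hχ : ∀ h ∈ J, χ h = 1
  · rw [if_pos hχ, if_pos hχ]
    have ha0 : ((Nat.card J : ℕ) : ℂ) ≠ 0 := by
      exact_mod_cast Nat.cast_ne_zero.mpr Nat.card_pos.ne'
    have haa : ((Real.sqrt (Nat.card J) : ℂ))⁻¹ * ((Real.sqrt (Nat.card J) : ℂ))⁻¹
        = (((Nat.card J : ℕ) : ℂ))⁻¹ := by
      rw [← mul_inv, ← Complex.ofReal_mul, Real.mul_self_sqrt (Nat.cast_nonneg _),
        Complex.ofReal_natCast]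
    have hnn : ((Real.sqrt (Fintype.card G) : ℂ))⁻¹ * ((Real.sqrt (Fintype.card G) : ℂ))⁻¹
        = (((Fintype.card G : ℕ) : ℂ))⁻¹ := by
      rw [← mul_inv, ← Complex.ofReal_mul, Real.mul_self_sqrt (Nat.cast_nonneg _),
        Complex.ofReal_natCast]
    have hc := conj_char_mul χ c
    simp only [map_mul, map_inv₀, Complex.conj_ofReal, map_natCast]
    calc ((Real.sqrt (Nat.card J) : ℂ))⁻¹ * ((Real.sqrt (Fintype.card G) : ℂ))⁻¹ *
          ((χ c : ℂ) * ((Nat.card J : ℕ) : ℂ)) *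
          (((Real.sqrt (Nat.card J) : ℂ))⁻¹ * ((Real.sqrt (Fintype.card G) : ℂ))⁻¹ *
          (conj ((χ c : ℂ)) * ((Nat.card J : ℕ) : ℂ)))
        = (((Real.sqrt (Nat.card J) : ℂ))⁻¹ * ((Real.sqrt (Nat.card J) : ℂ))⁻¹) *
          (((Real.sqrt (Fintype.card G) : ℂ))⁻¹ * ((Real.sqrt (Fintype.card G) : ℂ))⁻¹) *
          (conj ((χ c : ℂ)) * (χ c : ℂ)) *
          (((Nat.card J : ℕ) : ℂ) * ((Nat.card J : ℕ) : ℂ)) := by ring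
      _ = (((Nat.card J : ℕ) : ℂ))⁻¹ * (((Fintype.card G : ℕ) : ℂ))⁻¹ * 1 *
          (((Nat.card J : ℕ) : ℂ) * ((Nat.card J : ℕ) : ℂ)) := by rw [haa, hnn, hc]
      _ = (Nat.card J : ℂ) / (Fintype.card G : ℂ) := by
          field_simp
  · rw [if_neg hχ, if_neg hχ]
    simp

lemma card_transversal [CommGroup G] [Fintype G] (J : Subgroup G) (K : Finset G)
    (hK : ∀ g : G, ∃! c, c ∈ K ∧ c⁻¹ * g ∈ J) : K.card * Nat.card J = Fintype.card G := by
  have hbij : Function.Bijective (fun p : ↥K × ↥J => (p.1 : G) * (p.2 : G)) := by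
    constructor
    · rintro ⟨⟨c1, hc1⟩, ⟨h1, hh1⟩⟩ ⟨⟨c2, hc2⟩, ⟨h2, hh2⟩⟩ heq
      simp only at heq
      obtain ⟨c, _, huniq⟩ := hK (c1 * h1)
      have e1 : c1 = c := huniq c1 ⟨hc1, by simpa using hh1⟩
      have e2 : c2 = c := huniq c2 ⟨hc2, by rw [heq]; simpa using hh2⟩
      have ec : c1 = c2 := e1.trans e2.symm
      subst ec
      have eh : h1 = h2 := mul_left_cancel heq
      simp [eh]
    · intro g
      obtain ⟨c, ⟨hcK, hcJ⟩, _⟩ := hK g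
      exact ⟨⟨⟨c, hcK⟩, ⟨c⁻¹ * g, hcJ⟩⟩, by simp⟩
  have hcard := Fintype.card_of_bijective hbij
  rw [Fintype.card_prod, Fintype.card_coe] at hcard
  rw [← hcard, Nat.card_eq_fintype_card]

/-- If `J ⊊ H`, then measuring the eliminating projection
`P = ∑_{χ ∉ H^⊥} |χ⟩⟨χ|` on `ρ_J` succeeds with probability at least `1/2`. -/
theorem stmt11 [CommGroup G] [Fintype G] [DecidableEq G] (J H : Subgroup G) (hJH : J < H)
    (K : Finset G) (hK : ∀ g : G, ∃! c, c ∈ K ∧ c⁻¹ * g ∈ J) :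
    (1 : ℝ) / 2 ≤
      (Matrix.trace
        ((((Nat.card J : ℂ) / (Nat.card G : ℂ)) •
            ∑ c ∈ K, outer (cosetState J c)) *
          ∑ᶠ χ ∈ {χ : G →* ℂˣ | χ ∉ annihilator H}, outer (charState χ))).re := by
  classical
  haveI : Fintype (G →* ℂˣ) := Fintype.ofFinite _
  set n := Fintype.card G with hn
  set a := Nat.card J with ha
  set b := Nat.card H with hb
  set p := Nat.card (annihilator J) with hp
  set q := Nat.card (annihilator H) with hq
  set T : Finset (G →* ℂˣ) := Set.toFinset {χ : G →* ℂˣ | χ ∉ annihilator H} with hT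
  have hfs : ∑ᶠ χ ∈ {χ : G →* ℂˣ | χ ∉ annihilator H}, outer (charState χ)
      = ∑ χ ∈ T, outer (charState χ) := by
    rw [hT, ← finsum_mem_coe_finset, Set.coe_toFinset]
  rw [hfs, Matrix.smul_mul, Matrix.trace_smul, Finset.sum_mul, Matrix.trace_sum]
  have hterm : ∀ c ∈ K, Matrix.trace (outer (cosetState J c) * ∑ χ ∈ T, outer (charState χ))
      = ∑ χ ∈ T, (if (∀ h ∈ J, χ h = 1) then ((a : ℂ) / (n : ℂ)) else 0) := by
    intro c _
    rw [Finset.mul_sum, Matrix.trace_sum]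
    exact Finset.sum_congr rfl fun χ _ => trace_term J c χ
  rw [Finset.sum_congr rfl hterm]
  -- compute the inner sum
  set A : Finset (G →* ℂˣ) := Set.toFinset ((annihilator J : Subgroup (G →* ℂˣ)) : Set _) with hA
  set B : Finset (G →* ℂˣ) := Set.toFinset ((annihilator H : Subgroup (G →* ℂˣ)) : Set _) with hB
  have hBA : B ⊆ A := by
    intro χ hχ
    rw [hB, Set.mem_toFinset] at hχ
    rw [hA, Set.mem_toFinset]
    exact fun h hh => hχ h (hJH.le hh)
  have hfilter : T.filter (fun χ => ∀ h ∈ J, χ h = 1) = A \ B := by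
    ext χ
    simp only [Finset.mem_filter, Finset.mem_sdiff, hT, hA, hB, Set.mem_toFinset,
      Set.mem_setOf_eq, SetLike.mem_coe, mem_annihilator]
    tauto
  have hAcard : A.card = p := by
    rw [hA, Set.toFinset_card, hp, Nat.card_eq_fintype_card]
    rfl
  have hBcard : B.card = q := by
    rw [hB, Set.toFinset_card, hq, Nat.card_eq_fintype_card]
    rfl
  have hsum : (∑ χ ∈ T, (if (∀ h ∈ J, χ h = 1) then ((a : ℂ) / (n : ℂ)) else 0))
      = ((p - q : ℕ) : ℂ) * ((a : ℂ) / (n : ℂ)) := by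
    rw [← Finset.sum_filter, Finset.sum_const, hfilter, Finset.card_sdiff_of_subset hBA, hAcard, hBcard,
      nsmul_eq_mul]
  rw [Finset.sum_congr rfl (fun c _ => hsum), Finset.sum_const, nsmul_eq_mul]
  -- now everything is an explicit real number
  have hNc : (Nat.card G : ℂ) = (n : ℂ) := by rw [Nat.card_eq_fintype_card]
  rw [hNc, smul_eq_mul]
  have hre : ((a : ℂ) / (n : ℂ)) * ((K.card : ℂ) * (((p - q : ℕ) : ℂ) * ((a : ℂ) / (n : ℂ))))
      = ((((a : ℝ) / (n : ℝ)) * ((K.card : ℝ) * (((p - q : ℕ) : ℝ) * ((a : ℝ) / (n : ℝ)))) : ℝ)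
        : ℂ) := by
    push_cast
    ring
  rw [hre, Complex.ofReal_re]
  -- numeric facts
  have ha0 : 0 < a := ha ▸ Nat.card_pos
  have hn0 : 0 < n := Fintype.card_pos
  have hKa : K.card * a = n := card_transversal J K hK
  have hpa : p * a = Nat.card G := card_annihilator J
  have hqb : q * b = Nat.card G := card_annihilator H
  have hnG : Nat.card G = n := Nat.card_eq_fintype_card
  rw [hnG] at hpa hqb
  -- b ≥ 2a
  have hb0 : 0 < b := hb ▸ Nat.card_pos
  have hab : a < b := by
    have hlt : (J : Set G) ⊂ (H : Set G) := by
      exact_mod_cast SetLike.coe_ssubset_coe.mpr hJH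
    have h2 : (J : Set G).ncard < (H : Set G).ncard := Set.ncard_lt_ncard hlt (Set.toFinite _)
    rwa [← Nat.card_coe_set_eq, ← Nat.card_coe_set_eq] at h2
  have hb2a : 2 * a ≤ b := by
    obtain ⟨t, ht⟩ := Subgroup.card_dvd_of_le hJH.le
    rw [← ha, ← hb] at ht
    rcases Nat.lt_or_ge t 2 with h2 | h2
    · interval_cases t <;> omega
    · calc 2 * a ≤ t * a := Nat.mul_le_mul_right a h2
        _ = b := by rw [ht, mul_comm]
  have hqp : 2 * q ≤ p := by
    have h1 : 2 * q * a ≤ p * a := by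
      calc 2 * q * a = q * (2 * a) := by ring
        _ ≤ q * b := Nat.mul_le_mul_left q hb2a
        _ = p * a := by rw [hqb, hpa]
    exact Nat.le_of_mul_le_mul_right h1 ha0
  have hq_le_p : q ≤ p := le_trans (Nat.le_mul_of_pos_left q (by norm_num)) hqp
  -- final real inequality
  have hKa' : ((K.card : ℝ)) * (a : ℝ) = (n : ℝ) := by exact_mod_cast hKa
  have hn0' : (0 : ℝ) < (n : ℝ) := by exact_mod_cast hn0
  have step1 : ((a : ℝ) / n) * ((K.card : ℝ) * (((p - q : ℕ) : ℝ) * ((a : ℝ) / n)))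
      = (((p - q : ℕ) : ℝ) * a) / n := by
    have : ((a : ℝ) / n) * ((K.card : ℝ) * (((p - q : ℕ) : ℝ) * ((a : ℝ) / n)))
        = ((K.card : ℝ) * a / n) * (((p - q : ℕ) : ℝ) * a / n) := by ring
    rw [this, hKa', div_self hn0'.ne', one_mul]
  rw [step1]
  rw [div_le_div_iff₀ (by norm_num) hn0']
  have hnat : n ≤ 2 * ((p - q) * a) := by
    have h2 : p ≤ 2 * (p - q) := by omega
    calc n = p * a := hpa.symm
      _ ≤ (2 * (p - q)) * a := Nat.mul_le_mul_right a h2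
      _ = 2 * ((p - q) * a) := by ring
  calc (1 : ℝ) * n = (n : ℝ) := one_mul _
    _ ≤ ((2 * ((p - q) * a) : ℕ) : ℝ) := by exact_mod_cast hnat
    _ = ((p - q : ℕ) : ℝ) * a * 2 := by push_cast; ring
end
end

section
/- Let P be a prime and k₁ ≠ k₂ in Z_P. If a vector v ∈ ℂ[Z_P × Z_2] is both k₁-antiperiodic and k₂-antiperiodic (v = ∑_i λ_i e_{(i,0)} - ∑_i λ_i e_{(i+k₁,1)} = ∑_i μ_i e_{(i,0)} - ∑_i μ_i e_{(i+k₂,1)}), then v is a scalar multiple of ∑_i e_{(i,0)} - ∑_i e_{(i,1)}. -/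
open scoped BigOperators

noncomputable section

/-- If `P` is prime, `k₁ ≠ k₂` in `Z_P`, and `v` is both `k₁`-antiperiodic and
`k₂`-antiperiodic, then `v` is a scalar multiple of
`∑_i e_{(i,0)} - ∑_i e_{(i,1)}`. -/
theorem stmt16 (P : ℕ) [Fact P.Prime] (k₁ k₂ : ZMod P) (hk : k₁ ≠ k₂)
    (v : EuclideanSpace ℂ (ZMod P × ZMod 2)) (l m : ZMod P → ℂ)
    (hv1 : v = (∑ i : ZMod P, l i • EuclideanSpace.single (i, (0 : ZMod 2)) (1 : ℂ)) -
        ∑ i : ZMod P, l i • EuclideanSpace.single (i + k₁, (1 : ZMod 2)) (1 : ℂ))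
    (hv2 : v = (∑ i : ZMod P, m i • EuclideanSpace.single (i, (0 : ZMod 2)) (1 : ℂ)) -
        ∑ i : ZMod P, m i • EuclideanSpace.single (i + k₂, (1 : ZMod 2)) (1 : ℂ)) :
    ∃ c : ℂ,
      v = c • ((∑ i : ZMod P, EuclideanSpace.single (i, (0 : ZMod 2)) (1 : ℂ)) -
          ∑ i : ZMod P, EuclideanSpace.single (i, (1 : ZMod 2)) (1 : ℂ)) := by
  have key : ∀ (f : ZMod P → ℂ) (k : ZMod P) (x : ZMod P × ZMod 2),
      ((∑ i : ZMod P, f i • EuclideanSpace.single (i, (0 : ZMod 2)) (1 : ℂ)) -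
        ∑ i : ZMod P, f i • EuclideanSpace.single (i + k, (1 : ZMod 2)) (1 : ℂ)) x
      = (if x.2 = 0 then f x.1 else 0) - (if x.2 = 1 then f (x.1 - k) else 0) := by
    intro f k x
    rw [PiLp.sub_apply, WithLp.ofLp_sum, WithLp.ofLp_sum, Finset.sum_apply, Finset.sum_apply]
    congr 1
    · rcases x with ⟨a, b⟩
      by_cases hb : b = 0 <;>
        simp [PiLp.smul_apply, EuclideanSpace.single_apply, Prod.ext_iff, hb,
          Finset.sum_ite_eq', eq_comm]
    · rcases x with ⟨a, b⟩
      by_cases hb : b = 1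
      · simp only [hb, if_pos rfl]
        rw [Finset.sum_eq_single (a - k)]
        · simp [PiLp.smul_apply, EuclideanSpace.single_apply, Prod.ext_iff,
            sub_add_cancel, hb]
        · intro b1 _ hb1
          simp only [PiLp.smul_apply, EuclideanSpace.single_apply, Prod.ext_iff,
            smul_eq_mul]
          rw [if_neg, mul_zero]
          rintro ⟨h, -⟩
          exact hb1 (by rw [h]; ring)
        · simp
      · simp [PiLp.smul_apply, EuclideanSpace.single_apply, Prod.ext_iff, hb]
  have h0 : ∀ j : ZMod P, l j = m j := by
    intro j
    have a1 := congrFun (congrArg WithLp.ofLp hv1) (j, 0); have a2 := congrFun (congrArg WithLp.ofLp hv2) (j, 0)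
    rw [key] at a1 a2
    simp at a1 a2
    rw [← a1, ← a2]
  have h1 : ∀ j : ZMod P, l (j - k₁) = m (j - k₂) := by
    intro j
    have a1 := congrFun (congrArg WithLp.ofLp hv1) (j, 1); have a2 := congrFun (congrArg WithLp.ofLp hv2) (j, 1)
    rw [key] at a1 a2
    simp at a1 a2
    have := a1.symm.trans a2
    simpa using this
  have hshift : ∀ j : ZMod P, l (j + (k₂ - k₁)) = l j := by
    intro j
    have := h1 (j + k₂)
    rw [show j + k₂ - k₂ = j by ring] at this
    rw [show j + (k₂ - k₁) = j + k₂ - k₁ by ring, h0, h0, ← this, h0]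
  have hd : (k₂ - k₁) ≠ 0 := sub_ne_zero.mpr (Ne.symm hk)
  have hnat : ∀ n : ℕ, l ((n : ZMod P) * (k₂ - k₁)) = l 0 := by
    intro n
    induction n with
    | zero => simp
    | succ n ih =>
      have : ((n + 1 : ℕ) : ZMod P) * (k₂ - k₁)
          = (n : ZMod P) * (k₂ - k₁) + (k₂ - k₁) := by push_cast; ring
      rw [this, hshift, ih]
  have hconst : ∀ j : ZMod P, l j = l 0 := by
    intro j
    have hj : ((j * (k₂ - k₁)⁻¹).val : ZMod P) * (k₂ - k₁) = j := by
      have : ((j * (k₂ - k₁)⁻¹).val : ZMod P) = j * (k₂ - k₁)⁻¹ := by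
        simp [ZMod.natCast_val, ZMod.cast_id]
      rw [this, mul_assoc, inv_mul_cancel₀ hd, mul_one]
    rw [← hj]
    exact hnat _
  refine ⟨l 0, ?_⟩
  rw [hv1]
  have e2 : ∑ i : ZMod P, l i • EuclideanSpace.single (i + k₁, (1 : ZMod 2)) (1 : ℂ)
      = ∑ i : ZMod P, l 0 • EuclideanSpace.single (i, (1 : ZMod 2)) (1 : ℂ) :=
    Fintype.sum_equiv (Equiv.addRight k₁)
      (fun i => l i • EuclideanSpace.single (i + k₁, (1 : ZMod 2)) (1 : ℂ))
      (fun i => l 0 • EuclideanSpace.single (i, (1 : ZMod 2)) (1 : ℂ))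
      (fun i => by simp only [Equiv.coe_addRight]; rw [hconst i])
  have e1 : ∑ i : ZMod P, l i • EuclideanSpace.single (i, (0 : ZMod 2)) (1 : ℂ)
      = ∑ i : ZMod P, l 0 • EuclideanSpace.single (i, (0 : ZMod 2)) (1 : ℂ) :=
    Finset.sum_congr rfl (fun i _ => by rw [hconst i])
  rw [e1, e2, smul_sub, Finset.smul_sum, Finset.smul_sum]
end
end

section
/- Let P be prime. The intersection over any two distinct k₁, k₂ ∈ Z_P of the orthogonal complements of span{e_{(a,0)} + e_{(a+k,1)} : a ∈ Z_P} (for k = k₁ and k = k₂) is the one-dimensional subspace spanned by v = ∑_{i} e_{(i,0)} - ∑_i e_{(i,1)}; in particular its dimension is 1, strictly less than 2P - 2. -/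
open scoped BigOperators

noncomputable section

lemma mem_orth_span_iff {ι : Type*} [Fintype ι] (s : Set (EuclideanSpace ℂ ι))
    (x : EuclideanSpace ℂ ι) :
    x ∈ (Submodule.span ℂ s)ᗮ ↔ ∀ v ∈ s, (inner ℂ v x : ℂ) = 0 := by
  rw [Submodule.mem_orthogonal]
  constructor
  · intro h v hv; exact h v (Submodule.subset_span hv)
  · intro h u hu
    induction hu using Submodule.span_induction with
    | mem v hv => exact h v hv
    | zero => simp
    | add a b _ _ ha hb => rw [inner_add_left, ha, hb, add_zero]
    | smul c a _ ha => rw [inner_smul_left, ha, mul_zero]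

lemma periodic_const {P : ℕ} [Fact P.Prime] (d : ZMod P) (hd : d ≠ 0)
    (g : ZMod P → ℂ) (hg : ∀ b, g (b + d) = g b) : ∀ b, g b = g 0 := by
  have key : ∀ n : ℕ, ∀ b, g (b + n * d) = g b := by
    intro n
    induction n with
    | zero => simp
    | succ m ih =>
        intro b
        have : b + (m + 1 : ℕ) * d = (b + m * d) + d := by push_cast; ring
        rw [this, hg, ih]
  intro b
  have hb : b = 0 + ((b * d⁻¹).val : ℕ) * d := by
    rw [ZMod.natCast_rightInverse, zero_add, mul_assoc, inv_mul_cancel₀ hd, mul_one]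
  rw [hb, key]

lemma sum_single_apply (P : ℕ) [Fact P.Prime] (c : ZMod 2) (a : ZMod P) (b : ZMod 2) :
    (∑ i : ZMod P, EuclideanSpace.single (i, c) (1 : ℂ)) (a, b)
        = (if b = c then 1 else 0 : ℂ) := by
  rw [show ((∑ i : ZMod P, EuclideanSpace.single (i, c) (1 : ℂ)) (a, b))
      = ∑ i : ZMod P, (EuclideanSpace.single (i, c) (1 : ℂ)) (a, b) from
      by rw [WithLp.ofLp_sum]; exact Finset.sum_apply _ _ _]
  simp only [EuclideanSpace.single_apply, Prod.mk.injEq]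
  by_cases hb : b = c
  · subst hb; simp
  · simp [hb]

lemma orth_cond (P : ℕ) [Fact P.Prime] (k : ZMod P) (x : EuclideanSpace ℂ (ZMod P × ZMod 2)) :
    x ∈ (Submodule.span ℂ (Set.range fun a : ZMod P =>
          EuclideanSpace.single (a, (0 : ZMod 2)) (1 : ℂ) +
            EuclideanSpace.single (a + k, (1 : ZMod 2)) (1 : ℂ)))ᗮ ↔
      ∀ a : ZMod P, x (a, 0) + x (a + k, 1) = 0 := by
  rw [mem_orth_span_iff]
  constructor
  · intro h a
    have := h _ (Set.mem_range_self a)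
    simpa [inner_add_left, EuclideanSpace.inner_single_left] using this
  · intro h w hw
    obtain ⟨a, rfl⟩ := hw
    simpa [inner_add_left, EuclideanSpace.inner_single_left] using h a

/-- For `P` prime and distinct `k₁, k₂ ∈ Z_P`, the intersection of the two
orthogonal complements of the spans of coset states of the reflection subgroups
`{(0,0),(k₁,1)}` and `{(0,0),(k₂,1)}` of `D_P` is the one-dimensional subspace
spanned by `v = ∑_i e_{(i,0)} - ∑_i e_{(i,1)}`; in particular its dimension is
`1 < 2P - 2`. -/
theorem stmt18 (P : ℕ) [Fact P.Prime] (k₁ k₂ : ZMod P) (hk : k₁ ≠ k₂) :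
    ((Submodule.span ℂ (Set.range fun a : ZMod P =>
          EuclideanSpace.single (a, (0 : ZMod 2)) (1 : ℂ) +
            EuclideanSpace.single (a + k₁, (1 : ZMod 2)) (1 : ℂ)))ᗮ ⊓
        (Submodule.span ℂ (Set.range fun a : ZMod P =>
          EuclideanSpace.single (a, (0 : ZMod 2)) (1 : ℂ) +
            EuclideanSpace.single (a + k₂, (1 : ZMod 2)) (1 : ℂ)))ᗮ =
      Submodule.span ℂ
        {(∑ i : ZMod P, EuclideanSpace.single (i, (0 : ZMod 2)) (1 : ℂ)) -
          ∑ i : ZMod P, EuclideanSpace.single (i, (1 : ZMod 2)) (1 : ℂ)}) ∧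
    Module.finrank ℂ
        ((Submodule.span ℂ (Set.range fun a : ZMod P =>
          EuclideanSpace.single (a, (0 : ZMod 2)) (1 : ℂ) +
            EuclideanSpace.single (a + k₁, (1 : ZMod 2)) (1 : ℂ)))ᗮ ⊓
        (Submodule.span ℂ (Set.range fun a : ZMod P =>
          EuclideanSpace.single (a, (0 : ZMod 2)) (1 : ℂ) +
            EuclideanSpace.single (a + k₂, (1 : ZMod 2)) (1 : ℂ)))ᗮ :
          Submodule ℂ (EuclideanSpace ℂ (ZMod P × ZMod 2))) = 1 ∧
    1 < 2 * P - 2 := by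
  set v : EuclideanSpace ℂ (ZMod P × ZMod 2) :=
    (∑ i : ZMod P, EuclideanSpace.single (i, (0 : ZMod 2)) (1 : ℂ)) -
      ∑ i : ZMod P, EuclideanSpace.single (i, (1 : ZMod 2)) (1 : ℂ) with hv
  have hvcoord : ∀ (a : ZMod P) (b : ZMod 2),
      v (a, b) = ((if b = 0 then 1 else 0) - if b = 1 then 1 else 0 : ℂ) := by
    intro a b
    have : v (a, b) = (∑ i : ZMod P, EuclideanSpace.single (i, (0 : ZMod 2)) (1 : ℂ)) (a, b)
        - (∑ i : ZMod P, EuclideanSpace.single (i, (1 : ZMod 2)) (1 : ℂ)) (a, b) := rfl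
    rw [this, sum_single_apply, sum_single_apply]
  have hv0 : ∀ a : ZMod P, v (a, 0) = 1 := by intro a; rw [hvcoord]; norm_num
  have hv1 : ∀ a : ZMod P, v (a, 1) = -1 := by
    intro a; rw [hvcoord]
    have : (1 : ZMod 2) ≠ 0 := by decide
    simp [this]
  have heq : ((Submodule.span ℂ (Set.range fun a : ZMod P =>
          EuclideanSpace.single (a, (0 : ZMod 2)) (1 : ℂ) +
            EuclideanSpace.single (a + k₁, (1 : ZMod 2)) (1 : ℂ)))ᗮ ⊓
        (Submodule.span ℂ (Set.range fun a : ZMod P =>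
          EuclideanSpace.single (a, (0 : ZMod 2)) (1 : ℂ) +
            EuclideanSpace.single (a + k₂, (1 : ZMod 2)) (1 : ℂ)))ᗮ
        : Submodule ℂ (EuclideanSpace ℂ (ZMod P × ZMod 2))) = Submodule.span ℂ {v} := by
    apply le_antisymm
    · intro x hx
      rw [Submodule.mem_inf, orth_cond, orth_cond] at hx
      obtain ⟨h1, h2⟩ := hx
      -- x (·, 1) is periodic with period k₂ - k₁
      have hper : ∀ b : ZMod P, x (b + (k₂ - k₁), 1) = x (b, 1) := by
        intro b
        have e1 := h1 (b - k₁)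
        have e2 := h2 (b - k₁)
        rw [sub_add_cancel] at e1
        have h3 : b - k₁ + k₂ = b + (k₂ - k₁) := by ring
        rw [h3] at e2
        linear_combination e2 - e1
      have hconst := periodic_const (k₂ - k₁) (sub_ne_zero.mpr (Ne.symm hk))
        (fun b => x (b, 1)) hper
      rw [Submodule.mem_span_singleton]
      refine ⟨-x (0, 1), ?_⟩
      apply WithLp.ofLp_injective 2; funext p
      obtain ⟨a, b⟩ := p
      have hsmul : ((-x (0, 1)) • v) (a, b) = (-x (0, 1)) * v (a, b) := rfl
      have hx0 : ∀ a' : ZMod P, x (a', 0) = -x (0, 1) := by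
        intro a'
        have e1 := h1 a'
        have : x (a' + k₁, 1) = x (0, 1) := hconst (a' + k₁)
        rw [this] at e1
        linear_combination e1
      have hb : ∀ c : ZMod 2, c = 0 ∨ c = 1 := by decide
      rcases hb b with rfl | rfl
      · rw [hsmul, hv0, mul_one, hx0]
      · rw [hsmul, hv1]
        have := hconst a
        simp only at this
        rw [this]
        ring
    · rw [Submodule.span_singleton_le_iff_mem, Submodule.mem_inf, orth_cond, orth_cond]
      constructor <;> intro a <;> rw [hv0, hv1] <;> ring
  have hvne : v ≠ 0 := by
    intro h
    have : v (0, 0) = 0 := by rw [h]; rfl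
    rw [hv0] at this
    exact one_ne_zero this
  refine ⟨heq, ?_, ?_⟩
  · rw [heq]
    exact finrank_span_singleton hvne
  · have := (Fact.out : P.Prime).two_le
    omega
end
end
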